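/- Let G' be obtained from a finite simple graph G = (V,E), whose vertex set is partitioned into sets P_1,…,P_k, by adding, for each i, two new vertices gar_i and gar'_i, each adjacent to exactly the vertices of P_i. Then every dominating set of G' of size k contains exactly one vertex from each P_i and contains none of the vertices gar_i, gar'_i. -/
import Mathlib


/-- `I` is an independent set of the graph `G`. -/
def IsIndepFinset {α : Type*} (G : SimpleGraph α) (I : Finset α) : Prop :=
  ∀ u ∈ I, ∀ v ∈ I, ¬ G.Adj u v

/-- `D` is a dominating set of the graph `G`. -/
def IsDomFinset {α : Type*} (G : SimpleGraph α) (D : Finset α) : Prop :=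
  ∀ x : α, x ∈ D ∨ ∃ y ∈ D, G.Adj x y

/-- A token-jumping step: some token jumps from `u ∈ I` to `w ∉ I`. -/
def TJStep {α : Type*} [DecidableEq α] (I J : Finset α) : Prop :=
  ∃ u ∈ I, ∃ w, w ∉ I ∧ J = insert w (I.erase u)

/-- A token-sliding step: some token slides from `u ∈ I` along an edge to `w ∉ I`. -/
def TSStep {α : Type*} [DecidableEq α] (G : SimpleGraph α) (I J : Finset α) : Prop :=
  ∃ u ∈ I, ∃ w, w ∉ I ∧ G.Adj u w ∧ J = insert w (I.erase u)

/-- A partitioned token-jumping step with respect to token sets `Q`. -/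
def PTJStep {α : Type*} {ι : Type*} [DecidableEq α] (Q : ι → Set α) (I J : Finset α) : Prop :=
  ∃ u ∈ I, ∃ w, w ∉ I ∧ (∃ i, u ∈ Q i ∧ w ∈ Q i) ∧ J = insert w (I.erase u)

/-- A partitioned token-sliding step with respect to token sets `Q`. -/
def PTSStep {α : Type*} {ι : Type*} [DecidableEq α] (G : SimpleGraph α) (Q : ι → Set α)
    (I J : Finset α) : Prop :=
  ∃ u ∈ I, ∃ w, w ∉ I ∧ G.Adj u w ∧ (∃ i, u ∈ Q i ∧ w ∈ Q i) ∧ J = insert w (I.erase u)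

/-- There is a reconfiguration sequence `A = f 0, f 1, …, f ℓ = B` of length `ℓ`, all of whose
members satisfy `Valid`, with consecutive members related by `Step`. -/
def AdmitsSeq {α : Type*} (Valid : Finset α → Prop) (Step : Finset α → Finset α → Prop)
    (A B : Finset α) (ℓ : ℕ) : Prop :=
  ∃ f : ℕ → Finset α, f 0 = A ∧ f ℓ = B ∧ (∀ i, i ≤ ℓ → Valid (f i)) ∧
    ∀ i, i < ℓ → Step (f i) (f (i + 1))

/-- Vertices of the graph `G'`: the vertices of `G` together with new vertices `gar_i` and
`gar'_i` for each `i ∈ {1,…,k}`. -/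
inductive GVseven (V : Type*) (k : ℕ) : Type _ where
  | orig : V → GVseven V k
  | gar : Fin k → GVseven V k
  | gar' : Fin k → GVseven V k
deriving DecidableEq

/-- The edges of `G'`: the edges of `G`, plus `gar_i` and `gar'_i` adjacent to exactly the
vertices of `P_i`. -/
def relSeven {V : Type*} (G : SimpleGraph V) {k : ℕ} (P : Fin k → Finset V) :
    GVseven V k → GVseven V k → Prop
  | .orig v, .orig w => G.Adj v w
  | .gar i, .orig v => v ∈ P i
  | .gar' i, .orig v => v ∈ P i
  | _, _ => False

/-- The graph `G'` obtained from `G` by adding the guard vertices. -/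
def GpSeven {V : Type*} (G : SimpleGraph V) {k : ℕ} (P : Fin k → Finset V) :
    SimpleGraph (GVseven V k) :=
  SimpleGraph.fromRel (relSeven G P)

/-- every dominating set of `G'` of size `k` contains exactly one vertex from
each `P_i` and none of the vertices `gar_i`, `gar'_i`. -/
theorem stmt17 {V : Type*} [Fintype V] [DecidableEq V] (G : SimpleGraph V) (k : ℕ)
    (P : Fin k → Finset V) (hP : ∀ v : V, ∃! i, v ∈ P i)
    (hne : ∀ i, (P i).Nonempty)
    (D : Finset (GVseven V k)) (hD : IsDomFinset (GpSeven G P) D) (hcard : D.card = k) :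
    (∀ i : Fin k, ∃! z, z ∈ D ∧ ∃ v ∈ P i, z = GVseven.orig v) ∧
    (∀ i : Fin k, GVseven.gar i ∉ D ∧ GVseven.gar' i ∉ D) := by
  classical
  let g : GVseven V k → Fin k := fun z => match z with
    | .orig v => (hP v).choose
    | .gar i => i
    | .gar' i => i
  have hgorig : ∀ v i, v ∈ P i → g (.orig v) = i := fun v i hv =>
    ((hP v).choose_spec.2 i hv).symm
  have hgorig' : ∀ v i, g (.orig v) = i → v ∈ P i := by
    intro v i h
    have := (hP v).choose_spec.1
    rwa [show (hP v).choose = i from h] at this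
  -- each fiber of g over D is nonempty
  have hfib : ∀ i : Fin k, ∃ z ∈ D, g z = i := by
    intro i
    rcases hD (.gar i) with h | ⟨y, hy, hadj⟩
    · exact ⟨_, h, rfl⟩
    · rw [GpSeven, SimpleGraph.fromRel_adj] at hadj
      obtain ⟨-, h | h⟩ := hadj
      · match y, h with
        | .orig v, h => exact ⟨_, hy, hgorig v i h⟩
      · exfalso; cases y <;> simp [relSeven] at h
  have hsum : ∑ i : Fin k, (D.filter (fun z => g z = i)).card = k := by
    calc ∑ i : Fin k, (D.filter (fun z => g z = i)).card
        = D.card := (Finset.card_eq_sum_card_fiberwise (fun x _ => Finset.mem_univ (g x))).symm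
      _ = k := hcard
  have hone : ∀ i : Fin k, (D.filter (fun z => g z = i)).card = 1 := by
    have hle : ∀ i ∈ (Finset.univ : Finset (Fin k)),
        (1 : ℕ) ≤ (D.filter (fun z => g z = i)).card := by
      intro i _
      obtain ⟨z, hz, hgz⟩ := hfib i
      exact Finset.card_pos.mpr ⟨z, Finset.mem_filter.mpr ⟨hz, hgz⟩⟩
    have hsum1 : ∑ _i : Fin k, (1 : ℕ) = ∑ i : Fin k, (D.filter (fun z => g z = i)).card := by
      simp [hsum]
    intro i
    exact ((Finset.sum_eq_sum_iff_of_le hle).1 hsum1 i (Finset.mem_univ i)).symm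
  -- no guard is in D
  have hsecond : ∀ i : Fin k, ∀ z ∈ D, g z = i →
      (GVseven.gar i ∈ D → z = GVseven.gar i) ∧ (GVseven.gar' i ∈ D → z = GVseven.gar' i) := by
    intro i z hz hgz
    have h1 := hone i
    constructor
    · intro hg
      by_contra hne'
      have : 1 < (D.filter (fun z => g z = i)).card :=
        Finset.one_lt_card.mpr ⟨z, Finset.mem_filter.mpr ⟨hz, hgz⟩,
          GVseven.gar i, Finset.mem_filter.mpr ⟨hg, rfl⟩, hne'⟩
      omega
    · intro hg
      by_contra hne'
      have : 1 < (D.filter (fun z => g z = i)).card :=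
        Finset.one_lt_card.mpr ⟨z, Finset.mem_filter.mpr ⟨hz, hgz⟩,
          GVseven.gar' i, Finset.mem_filter.mpr ⟨hg, rfl⟩, hne'⟩
      omega
  have hng : ∀ i : Fin k, GVseven.gar i ∉ D ∧ GVseven.gar' i ∉ D := by
    intro i
    have key : ∀ j : Fin k, ¬ (GVseven.gar j ∈ D ∧ GVseven.gar' j ∈ D) := by
      intro j ⟨h1, h2⟩
      have := (hsecond j _ h1 rfl).2 h2
      simp at this
    constructor
    · intro hg
      -- gar' i must be dominated
      rcases hD (.gar' i) with h | ⟨y, hy, hadj⟩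
      · exact key i ⟨hg, h⟩
      · rw [GpSeven, SimpleGraph.fromRel_adj] at hadj
        obtain ⟨-, h | h⟩ := hadj
        · match y, h with
          | .orig v, h =>
            have := (hsecond i _ hy (hgorig v i h)).1 hg
            simp at this
        · cases y <;> simp [relSeven] at h
    · intro hg
      rcases hD (.gar i) with h | ⟨y, hy, hadj⟩
      · exact key i ⟨h, hg⟩
      · rw [GpSeven, SimpleGraph.fromRel_adj] at hadj
        obtain ⟨-, h | h⟩ := hadj
        · match y, h with
          | .orig v, h =>
            have := (hsecond i _ hy (hgorig v i h)).2 hg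
            simp at this
        · cases y <;> simp [relSeven] at h
  refine ⟨?_, hng⟩
  intro i
  obtain ⟨z, hz, hgz⟩ := hfib i
  match z, hgz with
  | .gar j, hgz => exact absurd (hgz ▸ hz) (hng i).1
  | .gar' j, hgz => exact absurd (hgz ▸ hz) (hng i).2
  | .orig v, hgz =>
    refine ⟨.orig v, ⟨hz, v, hgorig' v i hgz, rfl⟩, ?_⟩
    rintro z' ⟨hz', w, hw, rfl⟩
    have hmem1 : GVseven.orig w ∈ D.filter (fun z => g z = i) :=
      Finset.mem_filter.mpr ⟨hz', hgorig w i hw⟩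
    have hmem2 : GVseven.orig v ∈ D.filter (fun z => g z = i) :=
      Finset.mem_filter.mpr ⟨hz, hgz⟩
    have := Finset.card_le_one.1 (le_of_eq (hone i)) _ hmem1 _ hmem2
    exact this
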